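/- Let G be a finite nontrivial group. The complement of the proper power graph of G is not isomorphic to a path graph P_n for any n ≥ 2, and is not isomorphic to a star graph K_{1,n} for any n ≥ 1. -/

import Mathlib

open SimpleGraph

/-- The complement of the proper power graph of a finite group `G`: vertices are the
non-identity elements of `G`, and two vertices are adjacent iff neither is a power
of the other. -/
def propPowerCompl (G : Type*) [Group G] : SimpleGraph {g : G // g ≠ 1} where
  Adj u v := (u : G) ∉ Subgroup.zpowers (v : G) ∧ (v : G) ∉ Subgroup.zpowers (u : G)
  symm := ⟨fun u v h => ⟨h.2, h.1⟩⟩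
  loopless := ⟨fun u h => h.1 (Subgroup.mem_zpowers _)⟩

/-!
Let `x` be an element of maximal order `m` in `G`, `|G| = N`. Any `y` with `x ∈ ⟨y⟩` generates
`⟨x⟩` by maximality, so the neighbours of `x` are exactly the elements outside `⟨x⟩`, and `x` has
degree `N - m`, a multiple of `m`. If `m = 2`, every non-identity element has maximal order and
hence degree `N - 2 ≠ 1` (as `N` is even), so a graph with a vertex of degree one forces `m ≥ 3`.
Then the degree of `x` is `0` or at least `3`, and differs from `N - 2`. In `P_n` all degrees are
`1` or `2`, while in `K_{1,n}` (which has `N - 1 = n + 1` vertices) they are `1` or `N - 2`.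
-/

namespace SimpleGraph

theorem Iso.ncard_neighborSet_eq {V W : Type*} {G : SimpleGraph V} {G' : SimpleGraph W}
    (f : G ≃g G') (v : V) : (G'.neighborSet (f v)).ncard = (G.neighborSet v).ncard := by
  simp only [← Nat.card_coe_set_eq]
  exact Nat.card_congr (f.mapNeighborSet v).symm

theorem ncard_neighborSet_pathGraph_le_two {n : ℕ} (v : Fin n) :
    ((pathGraph n).neighborSet v).ncard ≤ 2 := by
  calc ((pathGraph n).neighborSet v).ncard
      ≤ ({v.val - 1, v.val + 1} : Set ℕ).ncard := by
        refine Set.ncard_le_ncard_of_injOn Fin.val (fun w hw => ?_) Fin.val_injective.injOn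
        rw [mem_neighborSet, pathGraph_adj] at hw
        simp only [Set.mem_insert_iff, Set.mem_singleton_iff]
        omega
    _ ≤ ({v.val + 1} : Set ℕ).ncard + 1 := Set.ncard_insert_le _ _
    _ = 2 := by rw [Set.ncard_singleton]

theorem ncard_neighborSet_pathGraph_pos {n : ℕ} (hn : 2 ≤ n) (v : Fin n) :
    0 < ((pathGraph n).neighborSet v).ncard := by
  have : Nontrivial (Fin n) := Fin.nontrivial_iff_two_le.mpr hn
  exact (Set.ncard_pos).mpr
    ((neighborSet_nonempty _).mpr ((pathGraph_preconnected n).not_isIsolated v))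

theorem pathGraph_neighborSet_zero {n : ℕ} (hn : 2 ≤ n) :
    (pathGraph n).neighborSet ⟨0, by omega⟩ = {⟨1, by omega⟩} := by
  ext w
  simp only [mem_neighborSet, pathGraph_adj, Set.mem_singleton_iff, Fin.ext_iff]
  omega

variable {α β : Type*}

theorem ncard_neighborSet_completeBipartiteGraph_inl (a : α) :
    ((completeBipartiteGraph α β).neighborSet (.inl a)).ncard = Nat.card β := by
  rw [← Set.ncard_range_of_injective Sum.inr_injective]
  congr
  ext (_ | _) <;> simp

theorem ncard_neighborSet_completeBipartiteGraph_inr (b : β) :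
    ((completeBipartiteGraph α β).neighborSet (.inr b)).ncard = Nat.card α := by
  rw [← Set.ncard_range_of_injective Sum.inl_injective]
  congr
  ext (_ | _) <;> simp

end SimpleGraph

theorem Nat.card_subtype_ne {α : Type*} [Finite α] (a : α) :
    Nat.card {b : α // b ≠ a} = Nat.card α - 1 := by
  rw [← Set.ncard_singleton a, ← Set.ncard_compl]
  rfl

section PropPowerCompl

variable {G : Type*} [Group G] [Finite G] {x : G}

theorem one_lt_orderOf_of_ne_one {g : G} (hg : g ≠ 1) : 1 < orderOf g :=
  Nat.one_lt_iff_ne_zero_and_ne_one.mpr ⟨(orderOf_pos g).ne', mt orderOf_eq_one_iff.mp hg⟩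

theorem mem_zpowers_of_mem_zpowers_of_forall_orderOf_le (hx : ∀ g : G, orderOf g ≤ orderOf x)
    {y : G} (h : x ∈ Subgroup.zpowers y) : y ∈ Subgroup.zpowers x := by
  have hle : Subgroup.zpowers x ≤ Subgroup.zpowers y := Subgroup.zpowers_le.mpr h
  rw [Subgroup.eq_of_le_of_card_ge hle (by simpa only [Nat.card_zpowers] using hx y)]
  exact Subgroup.mem_zpowers y

theorem propPowerCompl_neighborSet_of_forall_orderOf_le (hx : ∀ g : G, orderOf g ≤ orderOf x)
    (hx1 : x ≠ 1) :
    (propPowerCompl G).neighborSet ⟨x, hx1⟩ = Subtype.val ⁻¹' (Subgroup.zpowers x : Set G)ᶜ := by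
  ext u
  exact ⟨fun h => h.2,
    fun h => ⟨fun hxu => h (mem_zpowers_of_mem_zpowers_of_forall_orderOf_le hx hxu), h⟩⟩

theorem ncard_neighborSet_propPowerCompl_of_forall_orderOf_le
    (hx : ∀ g : G, orderOf g ≤ orderOf x) (hx1 : x ≠ 1) :
    ((propPowerCompl G).neighborSet ⟨x, hx1⟩).ncard = Nat.card G - orderOf x := by
  rw [propPowerCompl_neighborSet_of_forall_orderOf_le hx hx1,
    Set.ncard_preimage_of_injective_subset_range Subtype.val_injective, Set.ncard_compl,
    ← Nat.card_coe_set_eq, SetLike.coe_sort_coe, Nat.card_zpowers]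
  intro g hg
  exact ⟨⟨g, fun h => hg (h ▸ Subgroup.one_mem _)⟩, rfl⟩

theorem two_lt_orderOf_of_ncard_neighborSet_eq_one (hx : ∀ g : G, orderOf g ≤ orderOf x)
    {u : {g : G // g ≠ 1}} (hu : ((propPowerCompl G).neighborSet u).ncard = 1) :
    2 < orderOf x := by
  obtain ⟨u, hu1⟩ := u
  have hu2 : 2 ≤ orderOf u := one_lt_orderOf_of_ne_one hu1
  by_contra! hx2
  have hux : orderOf u = orderOf x := le_antisymm (hx u) (hx2.trans hu2)
  have hdeg := ncard_neighborSet_propPowerCompl_of_forall_orderOf_le (hux ▸ hx) hu1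
  have h2 : 2 ∣ Nat.card G := (by omega : orderOf u = 2) ▸ orderOf_dvd_natCard u
  omega

theorem exists_ncard_neighborSet_propPowerCompl_of_ncard_eq_one {u : {g : G // g ≠ 1}}
    (hu : ((propPowerCompl G).neighborSet u).ncard = 1) :
    ∃ v : {g : G // g ≠ 1}, ((propPowerCompl G).neighborSet v).ncard ∉ Set.Icc 1 2 ∧
      ((propPowerCompl G).neighborSet v).ncard + 2 ≠ Nat.card G := by
  obtain ⟨x, hx⟩ := Finite.exists_max (orderOf : G → ℕ)
  have hm := two_lt_orderOf_of_ncard_neighborSet_eq_one hx hu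
  have hx1 : x ≠ 1 := fun h => by simp [h] at hm
  refine ⟨⟨x, hx1⟩, ?_⟩
  rw [ncard_neighborSet_propPowerCompl_of_forall_orderOf_le hx hx1, Set.mem_Icc]
  have hmN : orderOf x ≤ Nat.card G := Nat.le_of_dvd Nat.card_pos (orderOf_dvd_natCard x)
  have hdvd : orderOf x ∣ Nat.card G - orderOf x := Nat.dvd_sub (orderOf_dvd_natCard x) dvd_rfl
  rcases Nat.eq_zero_or_pos (Nat.card G - orderOf x) with h0 | hpos
  · omega
  · have := Nat.le_of_dvd hpos hdvd
    omega

end PropPowerCompl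

theorem propPowerCompl_not_path_not_star_general (G : Type*) [Group G] [Finite G] :
    (∀ n : ℕ, 2 ≤ n → ¬ Nonempty ((propPowerCompl G) ≃g pathGraph n)) ∧
    (∀ n : ℕ, 1 ≤ n →
      ¬ Nonempty ((propPowerCompl G) ≃g completeBipartiteGraph (Fin 1) (Fin n))) := by
  refine ⟨fun n hn ⟨f⟩ => ?_, fun n hn ⟨f⟩ => ?_⟩
  · have hleaf := f.symm.ncard_neighborSet_eq ⟨0, by omega⟩
    rw [pathGraph_neighborSet_zero hn, Set.ncard_singleton] at hleaf
    obtain ⟨v, hv, -⟩ := exists_ncard_neighborSet_propPowerCompl_of_ncard_eq_one hleaf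
    have hle := ncard_neighborSet_pathGraph_le_two (f v)
    have hpos := ncard_neighborSet_pathGraph_pos hn (f v)
    rw [← f.ncard_neighborSet_eq, Set.mem_Icc] at hv
    omega
  · have hleaf := f.symm.ncard_neighborSet_eq (.inr ⟨0, hn⟩)
    rw [ncard_neighborSet_completeBipartiteGraph_inr, Nat.card_fin] at hleaf
    obtain ⟨v, hv, hvN⟩ := exists_ncard_neighborSet_propPowerCompl_of_ncard_eq_one hleaf
    have hV := Nat.card_congr f.toEquiv
    rw [Nat.card_subtype_ne, Nat.card_sum, Nat.card_fin, Nat.card_fin] at hV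
    rw [← f.ncard_neighborSet_eq, Set.mem_Icc] at hv
    rw [← f.ncard_neighborSet_eq] at hvN
    generalize f v = w at hv hvN
    rcases w with i | j
    · rw [ncard_neighborSet_completeBipartiteGraph_inl, Nat.card_fin] at hvN
      omega
    · rw [ncard_neighborSet_completeBipartiteGraph_inr, Nat.card_fin] at hv
      omega

/-- For a finite nontrivial group `G`, the complement of the proper power graph of
`G` is not isomorphic to a path `P_n` (`n ≥ 2`) and not isomorphic to a star
`K_{1,n}` (`n ≥ 1`). -/
theorem propPowerCompl_not_path_not_star (G : Type*) [Group G] [Finite G]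
    [Nontrivial G] :
    (∀ n : ℕ, 2 ≤ n → ¬ Nonempty ((propPowerCompl G) ≃g pathGraph n)) ∧
    (∀ n : ℕ, 1 ≤ n →
      ¬ Nonempty ((propPowerCompl G) ≃g completeBipartiteGraph (Fin 1) (Fin n))) :=
  propPowerCompl_not_path_not_star_general G
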